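/- arXiv:1405.2872 — 7 statements merged into one kernel-verified Lean document; each statement's English description precedes it below -/
import Mathlib

section
/- Let φ* : [0,T_g] → ℝᵐ be a continuous control trajectory each of whose m coordinate functions is Lipschitz continuous with constant α ≥ 0, let Δt > 0, let u* (t) = φ*(⌊t/Δt⌋·Δt) be its step-function approximation, and let u : [0,T_g] → ℝᵐ be any control trajectory with sup_{t ∈ [0,T_g]} ‖u(t) − u*(t)‖₁ ≤ ε. Let γ_{φ*} and γ_u be the state-space paths induced by φ* and u from the same initial state x₀. Then ‖γ_{φ*}(t) − γ_u(t)‖₁ ≤ (m·α·Δt + ε)·(exp(L_p·T_g) − 1) for every t ∈ [0,T_g]. -/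
/-!
Sampling `φ*` on the grid `Δt ℤ` moves each of its `m` coordinates by at most `α Δt`, so
`‖φ* − u‖₁ ≤ m α Δt + ε =: C` on `[0, T_g]`. The difference `g = γ_{φ*} − γ_u` then starts at `0`
and satisfies `‖g'‖ ≤ L_p ‖g‖ + L_p C`, and Grönwall's inequality gives `‖g(t)‖ ≤ C (e^{L_p t} − 1)`.
-/

open Real Set

theorem gronwallBound_zero_mul_right (K C x : ℝ) :
    gronwallBound 0 K (K * C) x = C * (exp (K * x) - 1) := by
  rcases eq_or_ne K 0 with rfl | hK
  · simp [gronwallBound_K0]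
  · rw [gronwallBound_of_K_ne_0 hK]
    field_simp
    ring

theorem norm_sub_le_of_hasDerivAt_of_controls {E F : Type*} [NormedAddCommGroup E]
    [NormedSpace ℝ E] [NormedAddCommGroup F] {f : E → F → ℝ → E} {L T C : ℝ} (hL : 0 ≤ L)
    (hf : ∀ x y u v, ∀ t ∈ Icc (0:ℝ) T, ‖f x u t - f y v t‖ ≤ L * (‖x - y‖ + ‖u - v‖))
    {u₁ u₂ : ℝ → F} (hu : ∀ t ∈ Icc (0:ℝ) T, ‖u₁ t - u₂ t‖ ≤ C)
    {γ₁ γ₂ : ℝ → E} (h0 : γ₁ 0 = γ₂ 0)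
    (hγ₁ : ∀ t ∈ Icc (0:ℝ) T, HasDerivAt γ₁ (f (γ₁ t) (u₁ t) t) t)
    (hγ₂ : ∀ t ∈ Icc (0:ℝ) T, HasDerivAt γ₂ (f (γ₂ t) (u₂ t) t) t) :
    ∀ t ∈ Icc (0:ℝ) T, ‖γ₁ t - γ₂ t‖ ≤ C * (exp (L * t) - 1) := by
  have hderiv : ∀ t ∈ Icc (0:ℝ) T,
      HasDerivAt (fun s => γ₁ s - γ₂ s) (f (γ₁ t) (u₁ t) t - f (γ₂ t) (u₂ t) t) t :=
    fun t ht => (hγ₁ t ht).sub (hγ₂ t ht)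
  have hbound : ∀ s ∈ Ico (0:ℝ) T,
      ‖f (γ₁ s) (u₁ s) s - f (γ₂ s) (u₂ s) s‖ ≤ L * ‖γ₁ s - γ₂ s‖ + L * C := by
    intro s hs
    have hs' := Ico_subset_Icc_self hs
    calc ‖f (γ₁ s) (u₁ s) s - f (γ₂ s) (u₂ s) s‖
        ≤ L * (‖γ₁ s - γ₂ s‖ + ‖u₁ s - u₂ s‖) := hf _ _ _ _ s hs'
      _ ≤ L * (‖γ₁ s - γ₂ s‖ + C) := by gcongr; exact hu s hs'
      _ = L * ‖γ₁ s - γ₂ s‖ + L * C := by ring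
  intro t ht
  simpa [gronwallBound_zero_mul_right] using
    norm_le_gronwallBound_of_norm_deriv_right_le (δ := 0)
      (fun s hs => (hderiv s hs).continuousAt.continuousWithinAt)
      (fun s hs => (hderiv s (Ico_subset_Icc_self hs)).hasDerivWithinAt)
      (by simp [h0]) hbound t ht

theorem PiLp.norm_le_card_mul_of_L1 {ι : Type*} [Fintype ι] {β : ι → Type*}
    [∀ i, SeminormedAddCommGroup (β i)] {x : PiLp 1 β} {c : ℝ} (h : ∀ i, ‖x i‖ ≤ c) :
    ‖x‖ ≤ Fintype.card ι * c := by
  rw [PiLp.norm_eq_of_L1]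
  simpa using Finset.sum_le_sum fun i (_ : i ∈ Finset.univ) => h i

theorem Int.floor_div_mul_mem_Icc_inter_Ici {t Δt : ℝ} (ht : 0 ≤ t) (hΔt : 0 < Δt) :
    (⌊t / Δt⌋ : ℝ) * Δt ∈ Icc 0 t ∩ Ici (t - Δt) := by
  have hfract : t - ⌊t / Δt⌋ * Δt = Int.fract (t / Δt) * Δt := by
    rw [Int.fract, sub_mul, div_mul_cancel₀ t hΔt.ne']
  refine ⟨⟨by positivity, ?_⟩, mem_Ici.2 ?_⟩
  · nlinarith [Int.fract_nonneg (t / Δt)]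
  · nlinarith [Int.fract_lt_one (t / Δt)]

theorem norm_sub_step_le {ι : Type*} [Fintype ι] {φ : ℝ → PiLp 1 (fun _ : ι => ℝ)}
    {T α Δt : ℝ} (hα : 0 ≤ α) (hΔt : 0 < Δt)
    (hφ : ∀ i, ∀ s ∈ Icc (0:ℝ) T, ∀ t ∈ Icc (0:ℝ) T, |φ t i - φ s i| ≤ α * |t - s|) :
    ∀ t ∈ Icc (0:ℝ) T, ‖φ t - φ (⌊t / Δt⌋ * Δt)‖ ≤ Fintype.card ι * α * Δt := by
  intro t ht
  obtain ⟨⟨hs0, hst⟩, hts⟩ := Int.floor_div_mul_mem_Icc_inter_Ici ht.1 hΔt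
  rw [mul_assoc]
  refine PiLp.norm_le_card_mul_of_L1 fun i => ?_
  calc |φ t i - φ (⌊t / Δt⌋ * Δt) i|
      ≤ α * |t - ⌊t / Δt⌋ * Δt| := hφ i _ ⟨hs0, hst.trans ht.2⟩ t ht
    _ ≤ α * Δt := by rw [abs_of_nonneg (sub_nonneg.2 hst)]; gcongr; linarith [mem_Ici.1 hts]

theorem stmt_4_general (n m : ℕ) (Lp Tg α Δt ε : ℝ) (hLp : 0 < Lp)
    (hα : 0 ≤ α) (hΔt : 0 < Δt)
    (f : PiLp 1 (fun _ : Fin n => ℝ) → PiLp 1 (fun _ : Fin m => ℝ) → ℝ →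
      PiLp 1 (fun _ : Fin n => ℝ))
    (hf : ∀ x y u v, ∀ t ∈ Icc (0:ℝ) Tg,
      ‖f x u t - f y v t‖ ≤ Lp * (‖x - y‖ + ‖u - v‖))
    (φs us u : ℝ → PiLp 1 (fun _ : Fin m => ℝ))
    (hφsLip : ∀ i : Fin m, ∀ s ∈ Icc (0:ℝ) Tg, ∀ t ∈ Icc (0:ℝ) Tg,
      |φs t i - φs s i| ≤ α * |t - s|)
    (hus : ∀ t, us t = φs ((⌊t / Δt⌋ : ℝ) * Δt))
    (hclose : ∀ t ∈ Icc (0:ℝ) Tg, ‖u t - us t‖ ≤ ε)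
    (x₀ : PiLp 1 (fun _ : Fin n => ℝ))
    (γφs γu : ℝ → PiLp 1 (fun _ : Fin n => ℝ))
    (hγφs0 : γφs 0 = x₀) (hγu0 : γu 0 = x₀)
    (hγφs : ∀ t ∈ Icc (0:ℝ) Tg, HasDerivAt γφs (f (γφs t) (φs t) t) t)
    (hγu : ∀ t ∈ Icc (0:ℝ) Tg, HasDerivAt γu (f (γu t) (u t) t) t) :
    ∀ t ∈ Icc (0:ℝ) Tg,
      ‖γφs t - γu t‖ ≤ (m * α * Δt + ε) * (Real.exp (Lp * Tg) - 1) := by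
  have hcontrols : ∀ t ∈ Icc (0:ℝ) Tg, ‖φs t - u t‖ ≤ m * α * Δt + ε := by
    intro t ht
    have hstep := norm_sub_step_le hα hΔt hφsLip t ht
    rw [Fintype.card_fin, ← hus] at hstep
    simpa only [dist_eq_norm] using
      (dist_triangle_right (φs t) (u t) (us t)).trans (add_le_add hstep (hclose t ht))
  intro t ht
  calc ‖γφs t - γu t‖ ≤ (m * α * Δt + ε) * (exp (Lp * t) - 1) :=
        norm_sub_le_of_hasDerivAt_of_controls hLp.le hf hcontrols (hγφs0.trans hγu0.symm)
          hγφs hγu t ht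
    _ ≤ (m * α * Δt + ε) * (exp (Lp * Tg) - 1) := by
        have := (norm_nonneg _).trans (hcontrols t ht)
        gcongr
        exact ht.2

/-- Equation (8) of the paper: if `u*` is the `Δt` step-function approximation of the
(coordinatewise `α`-Lipschitz) optimal trajectory `φ*` and `u` is `ε`-close to `u*`,
then the induced state-space paths (through the Lipschitz dynamics `f`, from the same
initial state) satisfy `‖γ_{φ*}(t) − γ_u(t)‖₁ ≤ (m·α·Δt + ε)·(e^{L_p T_g} − 1)`. -/
theorem stmt_4 (n m : ℕ) (Lp Tg α Δt ε : ℝ) (hLp : 0 < Lp) (hTg : 0 < Tg)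
    (hα : 0 ≤ α) (hΔt : 0 < Δt) (hε : 0 ≤ ε)
    (f : PiLp 1 (fun _ : Fin n => ℝ) → PiLp 1 (fun _ : Fin m => ℝ) → ℝ →
      PiLp 1 (fun _ : Fin n => ℝ))
    (hf : ∀ x y u v, ∀ t ∈ Icc (0:ℝ) Tg,
      ‖f x u t - f y v t‖ ≤ Lp * (‖x - y‖ + ‖u - v‖))
    (φs us u : ℝ → PiLp 1 (fun _ : Fin m => ℝ))
    (hφs : ContinuousOn φs (Icc 0 Tg))
    (hφsLip : ∀ i : Fin m, ∀ s ∈ Icc (0:ℝ) Tg, ∀ t ∈ Icc (0:ℝ) Tg,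
      |φs t i - φs s i| ≤ α * |t - s|)
    (hus : ∀ t, us t = φs ((⌊t / Δt⌋ : ℝ) * Δt))
    (hclose : ∀ t ∈ Icc (0:ℝ) Tg, ‖u t - us t‖ ≤ ε)
    (x₀ : PiLp 1 (fun _ : Fin n => ℝ))
    (γφs γu : ℝ → PiLp 1 (fun _ : Fin n => ℝ))
    (hγφs0 : γφs 0 = x₀) (hγu0 : γu 0 = x₀)
    (hγφs : ∀ t ∈ Icc (0:ℝ) Tg, HasDerivAt γφs (f (γφs t) (φs t) t) t)
    (hγu : ∀ t ∈ Icc (0:ℝ) Tg, HasDerivAt γu (f (γu t) (u t) t) t) :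
    ∀ t ∈ Icc (0:ℝ) Tg,
      ‖γφs t - γu t‖ ≤ (m * α * Δt + ε) * (Real.exp (Lp * Tg) - 1) :=
  stmt_4_general n m Lp Tg α Δt ε hLp hα hΔt f hf φs us u hφsLip hus hclose x₀ γφs γu hγφs0 hγu0
    hγφs hγu
end

section
/- Let ρ ∈ (0,1], let N ≥ 1, and let (a_j)_{j ≥ N} and (b_j)_{j ≥ N} be sequences of reals satisfying 0 ≤ b_j ≤ a_j ≤ 1 for all j ≥ N, a_j → 1 as j → ∞, and b_j ≥ b_{j−1} + (ρ/j)·(a_{j−1} − b_{j−1}) for all j > N. Then b_j → 1 as j → ∞. -/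
open Filter Topology

/-! A sequence pushed towards `v` at rates `c n` with `∑ c n = ∞` is monotone and bounded, so it
converges to some `L ≤ ℓ`; the increments `c n * (v n - u n)` are then summable by telescoping,
while their factors `v n - u n` tend to `ℓ - L`. Against the divergence of `∑ c n` this forces
`L = ℓ`. For the theorem, `c j = ρ / j` is a harmonic series. -/

theorem nonpos_of_tendsto_of_summable_mul {c x : ℕ → ℝ} {ℓ : ℝ} (hc : 0 ≤ c)
    (hc_not : ¬Summable c) (hx : Tendsto x atTop (𝓝 ℓ))
    (hcx : Summable fun n => c n * x n) : ℓ ≤ 0 := by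
  by_contra! hℓ
  refine hc_not ((hcx.mul_left (2 / ℓ)).of_norm_bounded_eventually_nat ?_)
  filter_upwards [hx.eventually (eventually_ge_nhds (half_lt_self hℓ))] with n hn
  rw [Real.norm_of_nonneg (hc n)]
  calc c n = 2 / ℓ * (c n * (ℓ / 2)) := by field_simp
    _ ≤ 2 / ℓ * (c n * x n) := by gcongr; exact hc n

theorem Monotone.summable_sub_of_le {u : ℕ → ℝ} {C : ℝ} (hu : Monotone u) (hC : ∀ n, u n ≤ C) :
    Summable fun n => u (n + 1) - u n := by
  refine summable_of_sum_range_le (fun n => sub_nonneg.2 (hu n.le_succ)) (c := C - u 0) ?_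
  intro n
  rw [Finset.sum_range_sub]
  linarith [hC n]

theorem tendsto_of_le_add_mul_sub {c u v : ℕ → ℝ} {ℓ : ℝ} (hc : 0 ≤ c) (hc_not : ¬Summable c)
    (huv : ∀ n, u n ≤ v n) (hu : ∀ n, u n ≤ ℓ) (hv : Tendsto v atTop (𝓝 ℓ))
    (hstep : ∀ n, u n + c n * (v n - u n) ≤ u (n + 1)) : Tendsto u atTop (𝓝 ℓ) := by
  have hinc : ∀ n, 0 ≤ c n * (v n - u n) := fun n => mul_nonneg (hc n) (sub_nonneg.2 (huv n))
  have hmono : Monotone u := monotone_nat_of_le_succ fun n => by linarith [hinc n, hstep n]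
  have hbdd : BddAbove (Set.range u) := ⟨ℓ, Set.forall_mem_range.2 hu⟩
  have hlim : Tendsto u atTop (𝓝 (⨆ n, u n)) := tendsto_atTop_ciSup hmono hbdd
  have hsum : Summable fun n => c n * (v n - u n) :=
    (hmono.summable_sub_of_le hu).of_nonneg_of_le hinc fun n => by linarith [hstep n]
  have hge : ℓ ≤ ⨆ n, u n := by
    linarith [nonpos_of_tendsto_of_summable_mul hc hc_not (hv.sub hlim) hsum]
  rwa [le_antisymm (ciSup_le hu) hge] at hlim

theorem not_summable_div_natCast_add (ρ : ℝ) (hρ : ρ ≠ 0) (k : ℕ) :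
    ¬Summable fun n : ℕ => ρ / ((n + k : ℕ) : ℝ) := by
  simp_rw [div_eq_mul_inv]
  rw [summable_nat_add_iff k (f := fun n : ℕ => ρ * (n : ℝ)⁻¹), summable_mul_left_iff hρ]
  exact Real.not_summable_natCast_inv

theorem stmt_7_general (ρ : ℝ) (hρ : ρ ∈ Set.Ioc (0:ℝ) 1) (N : ℕ)
    (a b : ℕ → ℝ)
    (hbound : ∀ j : ℕ, N ≤ j → 0 ≤ b j ∧ b j ≤ a j ∧ a j ≤ 1)
    (ha : Tendsto a atTop (nhds 1))
    (hrec : ∀ j : ℕ, N < j → b j ≥ b (j - 1) + (ρ / j) * (a (j - 1) - b (j - 1))) :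
    Tendsto b atTop (nhds 1) := by
  rw [← tendsto_add_atTop_iff_nat N]
  have hbound' (n : ℕ) := hbound (n + N) (Nat.le_add_left N n)
  refine tendsto_of_le_add_mul_sub (c := fun n => ρ / ((n + (N + 1) : ℕ) : ℝ))
    (fun n => div_nonneg hρ.1.le (Nat.cast_nonneg _)) (not_summable_div_natCast_add ρ hρ.1.ne' _)
    (fun n => (hbound' n).2.1) (fun n => (hbound' n).2.1.trans (hbound' n).2.2)
    ((tendsto_add_atTop_iff_nat N).2 ha) fun n => ?_
  simpa [Nat.add_right_comm n 1 N, ← add_assoc] using hrec (n + (N + 1)) (by omega)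

/-- Inductive step (milestone k−1 to k) of the convergence argument of Theorem 1 of the
paper: if `0 ≤ b_j ≤ a_j ≤ 1`, `a_j → 1`, and
`b_j ≥ b_{j−1} + (ρ/j)(a_{j−1} − b_{j−1})` for `j > N`, then `b_j → 1`. -/
theorem stmt_7 (ρ : ℝ) (hρ : ρ ∈ Set.Ioc (0:ℝ) 1) (N : ℕ) (hN : 1 ≤ N)
    (a b : ℕ → ℝ)
    (hbound : ∀ j : ℕ, N ≤ j → 0 ≤ b j ∧ b j ≤ a j ∧ a j ≤ 1)
    (ha : Tendsto a atTop (nhds 1))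
    (hrec : ∀ j : ℕ, N < j → b j ≥ b (j - 1) + (ρ / j) * (a (j - 1) - b (j - 1))) :
    Tendsto b atTop (nhds 1) :=
  stmt_7_general ρ hρ N a b hbound ha hrec
end

section
/- Let ρ ∈ (0,1] and let P_{j,k} ∈ [0,1] be defined for all integers 1 ≤ k ≤ j, satisfying: (i) P_{k,k} ≥ ρ^k / k! for every k ≥ 1; (ii) P_{j,k} ≤ P_{j,k−1} for all 2 ≤ k ≤ j; (iii) P_{j,1} ≥ P_{j−1,1} + (ρ/j)·(1 − P_{j−1,1}) for all j ≥ 2; (iv) P_{j,k} ≥ P_{j−1,k} + (ρ/j)·(P_{j−1,k−1} − P_{j−1,k}) for all j > k ≥ 2. Then for every fixed k ≥ 1, P_{j,k} → 1 as j → ∞. -/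
/-!
Write `x j = 1 - P j k` and `a j = ρ / (j + 1)`. Recurrences (iii) and (iv) say
`x (j+1) ≤ (1 - a j) x j + a j ε j`, where `ε j = 0` for `k = 1` and `ε j = 1 - P j (k-1)`
otherwise. Once `ε ≤ d`, the excess `max (x j - d) 0` is multiplied by at most
`1 - a j ≤ exp (-a j)` per step, so it is bounded by a constant times `exp (-∑ a)`, which tends
to zero because the harmonic series diverges. Hence `limsup x ≤ d` for every `d > 0`, and
induction on `k` propagates `ε → 0`.
-/

open Filter Finset

section Contraction

variable {z a : ℕ → ℝ} {N : ℕ}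

lemma mul_exp_sum_le_of_le_one_sub_mul (hz : ∀ n ≥ N, 0 ≤ z n)
    (h : ∀ n ≥ N, z (n + 1) ≤ (1 - a n) * z n) :
    ∀ n ≥ N, z n * Real.exp (∑ i ∈ range n, a i) ≤
      z N * Real.exp (∑ i ∈ range N, a i) := by
  refine Nat.le_induction le_rfl fun n hn ih => le_trans ?_ ih
  have hstep : z (n + 1) ≤ Real.exp (-a n) * z n :=
    (h n hn).trans (mul_le_mul_of_nonneg_right (by linarith [Real.add_one_le_exp (-a n)]) (hz n hn))
  calc z (n + 1) * Real.exp (∑ i ∈ range (n + 1), a i)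
      = z (n + 1) * Real.exp (a n) * Real.exp (∑ i ∈ range n, a i) := by
        rw [sum_range_succ, Real.exp_add]; ring
    _ ≤ Real.exp (-a n) * z n * Real.exp (a n) * Real.exp (∑ i ∈ range n, a i) := by
        gcongr
    _ = z n * Real.exp (∑ i ∈ range n, a i) := by
        rw [mul_comm (Real.exp (-a n)), mul_assoc (z n), ← Real.exp_add]; simp

lemma tendsto_zero_of_le_one_sub_mul (hz : ∀ n, 0 ≤ z n)
    (h : ∀ᶠ n in atTop, z (n + 1) ≤ (1 - a n) * z n)
    (ha : Tendsto (fun n => ∑ i ∈ range n, a i) atTop atTop) :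
    Tendsto z atTop (nhds 0) := by
  obtain ⟨N, hN⟩ := eventually_atTop.1 h
  have hbound := mul_exp_sum_le_of_le_one_sub_mul (fun n _ => hz n) hN
  set C := z N * Real.exp (∑ i ∈ range N, a i)
  have hC : Tendsto (fun n => C * Real.exp (-∑ i ∈ range n, a i)) atTop (nhds 0) := by
    simpa using (Real.tendsto_exp_neg_atTop_nhds_zero.comp ha).const_mul C
  refine tendsto_of_tendsto_of_tendsto_of_le_of_le' tendsto_const_nhds hC
    (Eventually.of_forall hz) ((eventually_ge_atTop N).mono fun n hn => ?_)
  rw [Real.exp_neg, ← div_eq_mul_inv, le_div_iff₀ (Real.exp_pos _)]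
  exact hbound n hn

end Contraction

lemma tendsto_zero_of_le_one_sub_mul_add_mul {x a ε : ℕ → ℝ}
    (hx : ∀ᶠ n in atTop, 0 ≤ x n) (ha : ∀ᶠ n in atTop, a n ∈ Set.Icc (0 : ℝ) 1)
    (hsum : Tendsto (fun n => ∑ i ∈ range n, a i) atTop atTop)
    (hε : Tendsto ε atTop (nhds 0))
    (hrec : ∀ᶠ n in atTop, x (n + 1) ≤ (1 - a n) * x n + a n * ε n) :
    Tendsto x atTop (nhds 0) := by
  refine tendsto_order.2 ⟨fun c hc => hx.mono fun n hn => hc.trans_le hn, fun c hc => ?_⟩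
  set d := c / 2 with hd
  have hεd : ∀ᶠ n in atTop, ε n ≤ d := (tendsto_order.1 hε).2 d (by positivity) |>.mono
    fun _ h => h.le
  have hexcess : Tendsto (fun n => max (x n - d) 0) atTop (nhds 0) := by
    refine tendsto_zero_of_le_one_sub_mul (fun n => le_max_right _ _) ?_ hsum
    filter_upwards [ha, hrec, hεd] with n ⟨ha0, ha1⟩ hrec hεd
    have hcontract : (1 - a n) * (x n - d) ≤ (1 - a n) * max (x n - d) 0 :=
      mul_le_mul_of_nonneg_left (le_max_left _ _) (by linarith)
    refine max_le ?_ (mul_nonneg (by linarith) (le_max_right _ _))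
    nlinarith
  filter_upwards [(tendsto_order.1 hexcess).2 d (by positivity)] with n hn
  linarith [le_max_left (x n - d) 0, hd]

lemma tendsto_one_of_add_mul_sub_le {p q a : ℕ → ℝ}
    (hp : ∀ᶠ n in atTop, p n ≤ 1) (ha : ∀ᶠ n in atTop, a n ∈ Set.Icc (0 : ℝ) 1)
    (hsum : Tendsto (fun n => ∑ i ∈ range n, a i) atTop atTop)
    (hq : Tendsto q atTop (nhds 1))
    (hrec : ∀ᶠ n in atTop, p n + a n * (q n - p n) ≤ p (n + 1)) :
    Tendsto p atTop (nhds 1) := by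
  have hgap : Tendsto (fun n => 1 - p n) atTop (nhds 0) := by
    refine tendsto_zero_of_le_one_sub_mul_add_mul (ε := fun n => 1 - q n)
      (hp.mono fun _ h => sub_nonneg.2 h) ha hsum (by simpa using hq.const_sub 1) ?_
    filter_upwards [hrec] with n h
    linarith
  simpa using hgap.const_sub 1

lemma tendsto_sum_range_div_nat_succ_atTop {c : ℝ} (hc : 0 < c) :
    Tendsto (fun n => ∑ i ∈ range n, c / ((i : ℝ) + 1)) atTop atTop := by
  simpa [mul_sum, div_eq_mul_one_div c] using
    Real.tendsto_sum_range_one_div_nat_succ_atTop.const_mul_atTop hc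

theorem stmt_8_general (ρ : ℝ) (hρ : ρ ∈ Set.Ioc (0:ℝ) 1)
    (P : ℕ → ℕ → ℝ)
    (hmem : ∀ j k : ℕ, 1 ≤ k → k ≤ j → P j k ∈ Set.Icc (0:ℝ) 1)
    (hiii : ∀ j : ℕ, 2 ≤ j → P j 1 ≥ P (j - 1) 1 + (ρ / j) * (1 - P (j - 1) 1))
    (hiv : ∀ j k : ℕ, 2 ≤ k → k < j →
      P j k ≥ P (j - 1) k + (ρ / j) * (P (j - 1) (k - 1) - P (j - 1) k)) :
    ∀ k : ℕ, 1 ≤ k → Tendsto (fun j => P j k) atTop (nhds 1) := by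
  obtain ⟨hρ0, hρ1⟩ := hρ
  have ha : ∀ᶠ n : ℕ in atTop, ρ / ((n : ℝ) + 1) ∈ Set.Icc (0 : ℝ) 1 :=
    Eventually.of_forall fun n => ⟨by positivity,
      div_le_one_of_le₀ (by linarith [(Nat.cast_nonneg n : (0 : ℝ) ≤ n)]) (by positivity)⟩
  have hsum := tendsto_sum_range_div_nat_succ_atTop hρ0
  have hp : ∀ k, 1 ≤ k → ∀ᶠ j in atTop, P j k ≤ 1 := fun k hk =>
    (eventually_ge_atTop k).mono fun j hj => (hmem j k hk hj).2
  refine Nat.le_induction ?_ fun k hk ih => ?_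
  · refine tendsto_one_of_add_mul_sub_le (hp 1 le_rfl) ha hsum tendsto_const_nhds ?_
    filter_upwards [eventually_ge_atTop 1] with j hj
    simpa using hiii (j + 1) (by omega)
  · refine tendsto_one_of_add_mul_sub_le (hp (k + 1) (by omega)) ha hsum ih ?_
    filter_upwards [eventually_gt_atTop k] with j hj
    simpa using hiv (j + 1) (k + 1) (by omega) (by omega)

/-- Analytic core of Theorem 1 of the paper: if `P j k ∈ [0,1]` (for `1 ≤ k ≤ j`)
satisfies (i) `P k k ≥ ρ^k/k!`, (ii) `P j k ≤ P j (k−1)`,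
(iii) `P j 1 ≥ P (j−1) 1 + (ρ/j)(1 − P (j−1) 1)`, and
(iv) `P j k ≥ P (j−1) k + (ρ/j)(P (j−1) (k−1) − P (j−1) k)` for `j > k ≥ 2`,
then `P j k → 1` as `j → ∞` for every fixed `k ≥ 1`. -/
theorem stmt_8 (ρ : ℝ) (hρ : ρ ∈ Set.Ioc (0:ℝ) 1)
    (P : ℕ → ℕ → ℝ)
    (hmem : ∀ j k : ℕ, 1 ≤ k → k ≤ j → P j k ∈ Set.Icc (0:ℝ) 1)
    (hi : ∀ k : ℕ, 1 ≤ k → P k k ≥ ρ ^ k / (Nat.factorial k : ℝ))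
    (hii : ∀ j k : ℕ, 2 ≤ k → k ≤ j → P j k ≤ P j (k - 1))
    (hiii : ∀ j : ℕ, 2 ≤ j → P j 1 ≥ P (j - 1) 1 + (ρ / j) * (1 - P (j - 1) 1))
    (hiv : ∀ j k : ℕ, 2 ≤ k → k < j →
      P j k ≥ P (j - 1) k + (ρ / j) * (P (j - 1) (k - 1) - P (j - 1) k)) :
    ∀ k : ℕ, 1 ≤ k → Tendsto (fun j => P j k) atTop (nhds 1) :=
  stmt_8_general ρ hρ P hmem hiii hiv
end

section
/- Let ρ > 0 and 0 < t₁ ≤ t₂, let Q₁ : [t₂, ∞) → ℝ satisfy Q₁(t) ≤ (1 − ρ)·t₁^ρ·t^{−ρ} for all t ≥ t₂, and let Q₂ : [t₂, ∞) → ℝ be differentiable with Q₂'(t) ≤ −(ρ/t)·(Q₂(t) − Q₁(t)) for all t ≥ t₂ and Q₂(t₂) ≤ 1 − ρ²/2. Then Q₂(t) ≤ t^{−ρ}·(α₁·ln t + α₂) for every t ≥ t₂, where α₁ = ρ·(1 − ρ)·t₁^ρ and α₂ = (1 − ρ²/2)·t₂^ρ − α₁·ln t₂. -/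
/-!
Multiplying by the integrating factor `t ^ ρ` turns the differential inequality into
`(t ^ ρ Q₂(t))' ≤ ρ t ^ (ρ - 1) Q₁(t) ≤ α₁ / t`, so `t ^ ρ Q₂(t) - α₁ ln t` is antitone on `[t₂, ∞)`;
comparing with its value at `t₂` gives the bound.
-/

open Real Set

lemma hasDerivAt_rpow_mul_sub_mul_log {ρ c s f' : ℝ} {f : ℝ → ℝ} (hs : 0 < s)
    (hf : HasDerivAt f f' s) :
    HasDerivAt (fun x => x ^ ρ * f x - c * log x)
      (s ^ ρ * (f' + ρ / s * f s - c * s ^ (-ρ - 1))) s := by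
  have hpow : HasDerivAt (fun x : ℝ => x ^ ρ) (ρ * s ^ (ρ - 1)) s :=
    hasDerivAt_rpow_const (Or.inl hs.ne')
  refine ((hpow.mul hf).sub ((hasDerivAt_log hs.ne').const_mul c)).congr_deriv ?_
  have hsub : s ^ (ρ - 1) = s ^ ρ / s := by rw [rpow_sub_one hs.ne']
  have hneg : s ^ ρ * s ^ (-ρ - 1) = s⁻¹ := by
    rw [← rpow_add hs, show ρ + (-ρ - 1) = -1 by ring, rpow_neg_one]
  rw [hsub, mul_sub, ← hneg]
  field_simp
  ring

theorem rpow_mul_le_of_deriv_le {ρ c a : ℝ} {f : ℝ → ℝ} (ha : 0 < a)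
    (hf : ∀ t, a ≤ t → DifferentiableAt ℝ f t)
    (hf' : ∀ t, a ≤ t → deriv f t ≤ -(ρ / t) * f t + c * t ^ (-ρ - 1)) :
    ∀ t, a ≤ t → t ^ ρ * f t ≤ a ^ ρ * f a + c * (log t - log a) := by
  have hg : ∀ s, a ≤ s → HasDerivAt (fun x => x ^ ρ * f x - c * log x)
      (s ^ ρ * (deriv f s + ρ / s * f s - c * s ^ (-ρ - 1))) s := fun s hs =>
    hasDerivAt_rpow_mul_sub_mul_log (ha.trans_le hs) (hf s hs).hasDerivAt
  have hanti : AntitoneOn (fun x => x ^ ρ * f x - c * log x) (Ici a) := by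
    refine antitoneOn_of_deriv_nonpos (convex_Ici a)
      (fun s hs => (hg s hs).continuousAt.continuousWithinAt) ?_ ?_
    · rw [interior_Ici]
      exact fun s hs => (hg s hs.le).differentiableAt.differentiableWithinAt
    · rw [interior_Ici]
      intro s hs
      rw [(hg s hs.le).deriv]
      refine mul_nonpos_of_nonneg_of_nonpos (rpow_nonneg (ha.trans hs).le ρ) ?_
      linarith [hf' s hs.le]
  intro t ht
  have := hanti self_mem_Ici ht ht
  simp only at this
  linarith

/-- Convergence-rate bound for the second milestone (Section 5.3 of the paper):
with `Q₁(t) ≤ (1 − ρ)·t₁^ρ·t^{−ρ}`, if `Q₂'(t) ≤ −(ρ/t)(Q₂(t) − Q₁(t))` for `t ≥ t₂`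
and `Q₂(t₂) ≤ 1 − ρ²/2`, then `Q₂(t) ≤ t^{−ρ}(α₁ ln t + α₂)` with
`α₁ = ρ(1 − ρ)t₁^ρ` and `α₂ = (1 − ρ²/2)t₂^ρ − α₁ ln t₂`. -/
theorem stmt_11 (ρ t₁ t₂ : ℝ) (hρ : 0 < ρ) (ht₁ : 0 < t₁) (ht₁₂ : t₁ ≤ t₂)
    (Q₁ Q₂ : ℝ → ℝ)
    (hQ₁ : ∀ t, t₂ ≤ t → Q₁ t ≤ (1 - ρ) * t₁ ^ ρ * t ^ (-ρ))
    (hdiff : ∀ t, t₂ ≤ t → DifferentiableAt ℝ Q₂ t)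
    (hderiv : ∀ t, t₂ ≤ t → deriv Q₂ t ≤ -(ρ / t) * (Q₂ t - Q₁ t))
    (hinit : Q₂ t₂ ≤ 1 - ρ ^ 2 / 2) :
    ∀ t, t₂ ≤ t →
      Q₂ t ≤ t ^ (-ρ) *
        ((ρ * (1 - ρ) * t₁ ^ ρ) * Real.log t +
          ((1 - ρ ^ 2 / 2) * t₂ ^ ρ - (ρ * (1 - ρ) * t₁ ^ ρ) * Real.log t₂)) := by
  have ht₂ : 0 < t₂ := ht₁.trans_le ht₁₂
  have hforcing : ∀ t, t₂ ≤ t →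
      deriv Q₂ t ≤ -(ρ / t) * Q₂ t + ρ * (1 - ρ) * t₁ ^ ρ * t ^ (-ρ - 1) := by
    intro t ht
    have htpos : 0 < t := ht₂.trans_le ht
    have hQ₁' : ρ / t * Q₁ t ≤ ρ / t * ((1 - ρ) * t₁ ^ ρ * t ^ (-ρ)) :=
      mul_le_mul_of_nonneg_left (hQ₁ t ht) (div_pos hρ htpos).le
    have hpow : t ^ (-ρ - 1) = t ^ (-ρ) / t := rpow_sub_one htpos.ne' _
    rw [hpow]
    linarith [hderiv t ht, show ρ / t * ((1 - ρ) * t₁ ^ ρ * t ^ (-ρ)) =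
      ρ * (1 - ρ) * t₁ ^ ρ * (t ^ (-ρ) / t) by ring]
  intro t ht
  have htpos : 0 < t := ht₂.trans_le ht
  have hcmp := rpow_mul_le_of_deriv_le ht₂ hdiff hforcing t ht
  have hinit' := mul_le_mul_of_nonneg_left hinit (rpow_nonneg ht₂.le ρ)
  calc Q₂ t = t ^ (-ρ) * (t ^ ρ * Q₂ t) := by
        rw [← mul_assoc, ← rpow_add htpos, neg_add_cancel, rpow_zero, one_mul]
    _ ≤ _ := mul_le_mul_of_nonneg_left (by linarith) (rpow_nonneg htpos.le _)
end

section
/- Let ρ > 0, s > 0, and let p be a real polynomial. Suppose h : [s, ∞) → ℝ satisfies h(t) ≤ t^{−ρ}·p(ln t) for all t ≥ s, and Q : [s, ∞) → ℝ is differentiable with Q'(t) ≤ −(ρ/t)·Q(t) + (ρ/t)·h(t) for all t ≥ s. Then there exists a real polynomial q with deg q ≤ deg p + 1 such that Q(t) ≤ t^{−ρ}·q(ln t) for all t ≥ s. -/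
/-!
Multiplying by the integrating factor `t ^ ρ`, the differential inequality becomes
`(t ^ ρ Q(t))' ≤ ρ t ^ (ρ - 1) h(t) ≤ ρ p(ln t) / t`, and the right-hand side is the derivative of
`ρ P(ln t)` for an antiderivative `P` of `p`. Comparing the two functions on `[s, t]` gives
`t ^ ρ Q(t) ≤ ρ P(ln t) + c`, so `q = ρ P + c` works.
-/

open Polynomial Real

theorem Polynomial.exists_derivative_eq_natDegree_le {K : Type*} [Field K] [CharZero K]
    (p : K[X]) : ∃ P : K[X], derivative P = p ∧ P.natDegree ≤ p.natDegree + 1 := by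
  refine ⟨p.sum fun n a => C (a / (n + 1)) * X ^ (n + 1), ?_, ?_⟩
  · rw [Polynomial.sum, map_sum]
    conv_rhs => rw [← p.sum_C_mul_X_pow_eq, Polynomial.sum]
    refine Finset.sum_congr rfl fun n _ => ?_
    rw [derivative_C_mul_X_pow, Nat.add_sub_cancel, Nat.cast_add, Nat.cast_one,
      div_mul_cancel₀ _ (Nat.cast_add_one_ne_zero n)]
  · refine natDegree_sum_le_of_forall_le _ _ fun n hn => (natDegree_C_mul_le _ _).trans ?_
    simpa using le_natDegree_of_mem_supp n hn

theorem Polynomial.hasDerivAt_eval_log (P : ℝ[X]) {t : ℝ} (ht : t ≠ 0) :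
    HasDerivAt (fun u => P.eval (log u)) ((derivative P).eval (log t) / t) t := by
  rw [div_eq_mul_inv]
  exact (P.hasDerivAt (log t)).comp t (hasDerivAt_log ht)

theorem hasDerivAt_rpow_mul {ρ t : ℝ} {Q : ℝ → ℝ} (ht : 0 < t) (hQ : DifferentiableAt ℝ Q t) :
    HasDerivAt (fun u => u ^ ρ * Q u) (t ^ ρ * (deriv Q t + ρ / t * Q t)) t := by
  refine ((hasDerivAt_rpow_const (Or.inl ht.ne')).mul hQ.hasDerivAt).congr_deriv ?_
  rw [rpow_sub ht, rpow_one]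
  ring

theorem rpow_mul_le_of_deriv_le_s12 {ρ s : ℝ} (hs : 0 < s) {Q B B' : ℝ → ℝ}
    (hQ : ∀ t, s ≤ t → DifferentiableAt ℝ Q t) (hB : ∀ t, s ≤ t → HasDerivAt B (B' t) t)
    (hbound : ∀ t, s ≤ t → t ^ ρ * (deriv Q t + ρ / t * Q t) ≤ B' t) {t : ℝ} (ht : s ≤ t) :
    t ^ ρ * Q t ≤ B t + (s ^ ρ * Q s - B s) := by
  have hf (u : ℝ) (hu : s ≤ u) := hasDerivAt_rpow_mul (ρ := ρ) (hs.trans_le hu) (hQ u hu)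
  refine image_le_of_deriv_right_le_deriv_boundary (B := fun u => B u + (s ^ ρ * Q s - B s))
    (fun u hu => (hf u hu.1).continuousAt.continuousWithinAt)
    (fun u hu => (hf u hu.1).hasDerivWithinAt) (by simp)
    (fun u hu => ((hB u hu.1).continuousAt.add continuousAt_const).continuousWithinAt)
    (fun u hu => ((hB u hu.1).add_const _).hasDerivWithinAt)
    (fun u hu => hbound u hu.1) ⟨ht, le_rfl⟩

theorem rpow_mul_deriv_add_le {ρ t Q' Q h y : ℝ} (hρ : 0 ≤ ρ) (ht : 0 < t)
    (hQ' : Q' ≤ -(ρ / t) * Q + (ρ / t) * h) (hh : h ≤ t ^ (-ρ) * y) :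
    t ^ ρ * (Q' + ρ / t * Q) ≤ ρ * y / t := by
  have htρ : 0 < t ^ ρ := rpow_pos_of_pos ht ρ
  calc t ^ ρ * (Q' + ρ / t * Q) ≤ t ^ ρ * (ρ / t) * h := by nlinarith
    _ ≤ t ^ ρ * (ρ / t) * (t ^ (-ρ) * y) := by gcongr
    _ = ρ * y / t := by
      rw [rpow_neg ht.le]
      field_simp

/-- Inductive step of the convergence-rate analysis of Section 5.3 of the paper:
if `h(t) ≤ t^{−ρ}·p(ln t)` and `Q'(t) ≤ −(ρ/t)·Q(t) + (ρ/t)·h(t)` for `t ≥ s`, then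
there is a polynomial `q` of degree at most `deg p + 1` with `Q(t) ≤ t^{−ρ}·q(ln t)`. -/
theorem stmt_12 (ρ s : ℝ) (hρ : 0 < ρ) (hs : 0 < s)
    (p : Polynomial ℝ) (h Q : ℝ → ℝ)
    (hh : ∀ t, s ≤ t → h t ≤ t ^ (-ρ) * p.eval (Real.log t))
    (hdiff : ∀ t, s ≤ t → DifferentiableAt ℝ Q t)
    (hderiv : ∀ t, s ≤ t → deriv Q t ≤ -(ρ / t) * Q t + (ρ / t) * h t) :
    ∃ q : Polynomial ℝ, q.natDegree ≤ p.natDegree + 1 ∧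
      ∀ t, s ≤ t → Q t ≤ t ^ (-ρ) * q.eval (Real.log t) := by
  obtain ⟨P, hPp, hPdeg⟩ := p.exists_derivative_eq_natDegree_le
  set c := s ^ ρ * Q s - ρ * P.eval (log s)
  have hcompare (t : ℝ) (ht : s ≤ t) : t ^ ρ * Q t ≤ ρ * P.eval (log t) + c := by
    refine rpow_mul_le_of_deriv_le_s12 hs hdiff (B := fun u => ρ * P.eval (log u))
      (B' := fun u => ρ * p.eval (log u) / u) (fun u hu => ?_) (fun u hu => ?_) ht
    · simpa [hPp, mul_div_assoc] using
        (P.hasDerivAt_eval_log (hs.trans_le hu).ne').const_mul ρ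
    · exact rpow_mul_deriv_add_le hρ.le (hs.trans_le hu) (hderiv u hu) (hh u hu)
  refine ⟨ρ • P + C c, ?_, fun t ht => ?_⟩
  · rw [natDegree_add_C]
    exact (natDegree_smul_le _ _).trans hPdeg
  · have ht0 : 0 < t := hs.trans_le ht
    rw [rpow_neg ht0.le, ← div_eq_inv_mul, le_div_iff₀ (rpow_pos_of_pos ht0 ρ)]
    simpa [mul_comm] using hcompare t ht
end

section
/- Let ρ ∈ (0,1), δ > 0, and set t_k = k·δ for k ≥ 1. Let Q_k : [t_k, ∞) → ℝ, k = 1, …, n (n ≥ 2), be differentiable nonnegative functions with Q₁'(t) ≤ −(ρ/t)·Q₁(t) for t ≥ t₁, Q_k'(t) ≤ −(ρ/t)·(Q_k(t) − Q_{k−1}(t)) for t ≥ t_k and 2 ≤ k ≤ n, and Q_k(t_k) ≤ 1 − ρ^k/k! for each k. Then there exists a real polynomial q with deg q ≤ n − 2 such that Q_n(t) ≤ t^{−ρ}·[ ((1 − ρ)·t₁^ρ·ρ^{n−1}/(n−1)!)·(ln t)^{n−1} + q(ln t) ] for all t ≥ t_n. -/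
/-!
Multiplying by `t ^ ρ` turns the cascade inequality into
`(t ^ ρ Q_k)' ≤ ρ t ^ (ρ - 1) Q_{k-1}`. Hence, if `t ^ ρ Q_{k-1}(t) ≤ p(ln t)` for a
polynomial `p`, integrating in the variable `ln t` gives `t ^ ρ Q_k(t) ≤ const + ρ P(ln t)`
with `P' = p`. Starting from `t ^ ρ Q_1(t) ≤ δ ^ ρ (1 - ρ)`, each step raises the degree by
one and multiplies the leading coefficient by `ρ / k`, which produces
`(1 - ρ) δ ^ ρ ρ ^ (n-1) / (n-1)!` in front of `(ln t) ^ (n-1)`.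
-/

open Polynomial Finset

namespace Polynomial

variable {K : Type*} [Field K]

noncomputable def antiderivative (p : K[X]) : K[X] :=
  ∑ i ∈ range (p.natDegree + 1), monomial (i + 1) (p.coeff i / (i + 1))

theorem derivative_antiderivative [CharZero K] (p : K[X]) : derivative (antiderivative p) = p := by
  rw [antiderivative, derivative_sum]
  conv_rhs => rw [p.as_sum_range' (p.natDegree + 1) (Nat.lt_succ_self _)]
  refine sum_congr rfl fun i _ => ?_
  rw [derivative_monomial, Nat.add_sub_cancel]
  congr 1
  push_cast
  field_simp

theorem coeff_antiderivative_succ (p : K[X]) (i : ℕ) :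
    (antiderivative p).coeff (i + 1) = p.coeff i / (i + 1) := by
  simp only [antiderivative, finsetSum_coeff, coeff_monomial, add_left_inj, sum_ite_eq',
    mem_range]
  split_ifs with h
  · rfl
  · rw [coeff_eq_zero_of_natDegree_lt (by omega), zero_div]

theorem natDegree_antiderivative_le (p : K[X]) :
    (antiderivative p).natDegree ≤ p.natDegree + 1 :=
  natDegree_sum_le_of_forall_le _ _ fun i hi =>
    (natDegree_monomial_le _).trans (by simpa [Nat.lt_succ_iff] using hi)

theorem natDegree_erase_le_pred {R : Type*} [Semiring R] {p : R[X]} {n : ℕ}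
    (hp : p.natDegree ≤ n) : (p.erase n).natDegree ≤ n - 1 := by
  rw [natDegree_le_iff_coeff_eq_zero]
  intro N hN
  rw [coeff_erase]
  split_ifs with h
  · rfl
  · exact coeff_eq_zero_of_natDegree_lt (by omega)

end Polynomial

theorem le_rpow_neg_mul_iff {t a b : ℝ} (ρ : ℝ) (ht : 0 < t) :
    a ≤ t ^ (-ρ) * b ↔ t ^ ρ * a ≤ b := by
  rw [Real.rpow_neg ht.le, inv_mul_eq_div, le_div_iff₀ (Real.rpow_pos_of_pos ht ρ), mul_comm]

theorem rpow_mul_le_of_deriv_le_s14 {ρ s t : ℝ} (hs : 0 < s) (hst : s ≤ t) {f g G : ℝ → ℝ}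
    (hG : ∀ x, HasDerivAt G (g x) x) (hf : ∀ t, s ≤ t → DifferentiableAt ℝ f t)
    (hf' : ∀ t, s ≤ t → deriv f t ≤ -(ρ / t) * (f t - t ^ (-ρ) * g (Real.log t))) :
    t ^ ρ * f t ≤ s ^ ρ * f s + ρ * (G (Real.log t) - G (Real.log s)) := by
  set F : ℝ → ℝ := fun t => t ^ ρ * f t - ρ * G (Real.log t) with hF
  set F' : ℝ → ℝ := fun t =>
    ρ * t ^ (ρ - 1) * f t + t ^ ρ * deriv f t - ρ * (g (Real.log t) * t⁻¹)
  have hasDeriv : ∀ t, s ≤ t → HasDerivAt F (F' t) t := fun t ht =>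
    have ht0 : t ≠ 0 := (hs.trans_le ht).ne'
    ((Real.hasDerivAt_rpow_const (Or.inl ht0)).mul (hf t ht).hasDerivAt).sub
      (((hG _).comp t (Real.hasDerivAt_log ht0)).const_mul ρ)
  have nonpos : ∀ t, s ≤ t → F' t ≤ 0 := by
    intro t ht
    have ht0 : 0 < t := hs.trans_le ht
    have key := mul_le_mul_of_nonneg_left (hf' t ht) (Real.rpow_nonneg ht0.le ρ)
    have expand : t ^ ρ * (-(ρ / t) * (f t - t ^ (-ρ) * g (Real.log t))) =
        -(ρ * t ^ (ρ - 1) * f t) + ρ * (g (Real.log t) * t⁻¹) := by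
      have := (Real.rpow_pos_of_pos ht0 ρ).ne'
      rw [Real.rpow_sub_one ht0.ne', Real.rpow_neg ht0.le]
      field_simp
      ring
    simp only [F']
    linarith
  have anti : AntitoneOn F (Set.Ici s) := by
    refine antitoneOn_of_deriv_nonpos (convex_Ici s)
      (fun t ht => (hasDeriv t ht).continuousAt.continuousWithinAt) ?_ ?_ <;>
      rw [interior_Ici]
    · exact fun t ht => (hasDeriv t ht.le).differentiableAt.differentiableWithinAt
    · exact fun t ht => (hasDeriv t ht.le).deriv ▸ nonpos t ht.le
  have hFt := anti Set.self_mem_Ici hst hst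
  simp only [hF] at hFt
  linarith

theorem le_rpow_neg_mul_of_deriv_le {ρ s t : ℝ} (hs : 0 < s) (hst : s ≤ t) {f : ℝ → ℝ}
    (hf : ∀ t, s ≤ t → DifferentiableAt ℝ f t)
    (hf' : ∀ t, s ≤ t → deriv f t ≤ -(ρ / t) * f t) :
    f t ≤ t ^ (-ρ) * (s ^ ρ * f s) := by
  have := rpow_mul_le_of_deriv_le_s14 (g := fun _ => 0) hs hst (fun x => hasDerivAt_const x 0) hf
    fun t ht => by simpa using hf' t ht
  rw [le_rpow_neg_mul_iff ρ (hs.trans_le hst)]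
  simpa using this

theorem exists_poly_bound_of_deriv_le {ρ s : ℝ} (hρ : 0 ≤ ρ) (hs : 0 < s) {f h : ℝ → ℝ}
    {p : ℝ[X]} {j : ℕ} (hp : p.natDegree ≤ j)
    (hh : ∀ t, s ≤ t → h t ≤ t ^ (-ρ) * p.eval (Real.log t))
    (hf : ∀ t, s ≤ t → DifferentiableAt ℝ f t)
    (hf' : ∀ t, s ≤ t → deriv f t ≤ -(ρ / t) * (f t - h t)) :
    ∃ q : ℝ[X], q.natDegree ≤ j + 1 ∧ q.coeff (j + 1) = ρ * p.coeff j / (j + 1) ∧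
      ∀ t, s ≤ t → f t ≤ t ^ (-ρ) * q.eval (Real.log t) := by
  set A := antiderivative p
  refine ⟨C (s ^ ρ * f s - ρ * A.eval (Real.log s)) + C ρ * A, ?_, ?_, fun t ht => ?_⟩
  · refine (natDegree_add_le _ _).trans (max_le ((natDegree_C _).trans_le (Nat.zero_le _)) ?_)
    exact (natDegree_C_mul_le _ _).trans ((natDegree_antiderivative_le p).trans (by omega))
  · simp [A, coeff_antiderivative_succ, mul_div_assoc]
  · have ht0 := hs.trans_le ht
    have hA : ∀ x, HasDerivAt (fun x => A.eval x) (p.eval x) x := fun x => by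
      simpa only [A, derivative_antiderivative] using A.hasDerivAt x
    have cascade_le : ∀ t, s ≤ t →
        deriv f t ≤ -(ρ / t) * (f t - t ^ (-ρ) * p.eval (Real.log t)) := fun t ht => by
      have := mul_le_mul_of_nonneg_left (hh t ht) (div_nonneg hρ (hs.trans_le ht).le)
      linarith [hf' t ht]
    have := rpow_mul_le_of_deriv_le_s14 hs ht hA hf cascade_le
    rw [le_rpow_neg_mul_iff ρ ht0]
    simp only [eval_add, eval_C, eval_mul]
    linarith

theorem mul_pow_div_factorial_succ (ρ c : ℝ) (j : ℕ) :
    ρ * (c * ρ ^ j / j.factorial) / (j + 1) = c * ρ ^ (j + 1) / (j + 1).factorial := by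
  rw [Nat.factorial_succ]
  push_cast
  field_simp
  ring

theorem exists_poly_bound_cascade {n : ℕ} {ρ δ c : ℝ} (hρ : 0 ≤ ρ) (hδ : 0 < δ)
    {Q : ℕ → ℝ → ℝ}
    (hdiff : ∀ k, 1 ≤ k → k ≤ n → ∀ t, (k : ℝ) * δ ≤ t → DifferentiableAt ℝ (Q k) t)
    (hderiv1 : ∀ t, δ ≤ t → deriv (Q 1) t ≤ -(ρ / t) * Q 1 t)
    (hderivk : ∀ k, 2 ≤ k → k ≤ n → ∀ t, (k : ℝ) * δ ≤ t →
      deriv (Q k) t ≤ -(ρ / t) * (Q k t - Q (k - 1) t))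
    (hinit : Q 1 δ ≤ c) {j : ℕ} (hj : j + 1 ≤ n) :
    ∃ p : ℝ[X], p.natDegree ≤ j ∧ p.coeff j = c * δ ^ ρ * ρ ^ j / j.factorial ∧
      ∀ t, ((j + 1 : ℕ) : ℝ) * δ ≤ t → Q (j + 1) t ≤ t ^ (-ρ) * p.eval (Real.log t) := by
  induction j with
  | zero =>
    refine ⟨C (c * δ ^ ρ), (natDegree_C _).le, by simp, fun t ht => ?_⟩
    simp only [zero_add, Nat.cast_one, one_mul] at ht ⊢
    have decay := le_rpow_neg_mul_of_deriv_le hδ ht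
      (fun t ht => hdiff 1 le_rfl hj t (by simpa using ht)) hderiv1
    rw [eval_C, mul_comm c]
    have hdecay_nonneg := Real.rpow_nonneg (hδ.trans_le ht).le (-ρ)
    exact decay.trans (by gcongr)
  | succ j ih =>
    obtain ⟨p, hp_deg, hp_coeff, hp_bound⟩ := ih (by omega)
    obtain ⟨q, hq_deg, hq_coeff, hq_bound⟩ := exists_poly_bound_of_deriv_le hρ
      (s := ((j + 1 + 1 : ℕ) : ℝ) * δ) (by positivity) hp_deg
      (fun t ht => hp_bound t (le_trans (by gcongr; omega) ht))
      (hdiff (j + 1 + 1) (by omega) hj) (hderivk (j + 1 + 1) (by omega) hj)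
    exact ⟨q, hq_deg, by rw [hq_coeff, hp_coeff, mul_pow_div_factorial_succ], hq_bound⟩

theorem stmt_14_general (n : ℕ) (hn : 2 ≤ n) (ρ δ : ℝ) (hρ : ρ ∈ Set.Ioo (0:ℝ) 1) (hδ : 0 < δ)
    (Q : ℕ → ℝ → ℝ)
    (hdiff : ∀ k : ℕ, 1 ≤ k → k ≤ n → ∀ t : ℝ, (k : ℝ) * δ ≤ t →
      DifferentiableAt ℝ (Q k) t)
    (hderiv1 : ∀ t : ℝ, (1 : ℝ) * δ ≤ t → deriv (Q 1) t ≤ -(ρ / t) * Q 1 t)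
    (hderivk : ∀ k : ℕ, 2 ≤ k → k ≤ n → ∀ t : ℝ, (k : ℝ) * δ ≤ t →
      deriv (Q k) t ≤ -(ρ / t) * (Q k t - Q (k - 1) t))
    (hinit : ∀ k : ℕ, 1 ≤ k → k ≤ n →
      Q k ((k : ℝ) * δ) ≤ 1 - ρ ^ k / (Nat.factorial k : ℝ)) :
    ∃ q : Polynomial ℝ, q.natDegree ≤ n - 2 ∧
      ∀ t : ℝ, (n : ℝ) * δ ≤ t →
        Q n t ≤ t ^ (-ρ) *
          (((1 - ρ) * δ ^ ρ * ρ ^ (n - 1) / (Nat.factorial (n - 1) : ℝ)) *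
              (Real.log t) ^ (n - 1) +
            q.eval (Real.log t)) := by
  obtain ⟨m, rfl⟩ : ∃ m, n = m + 1 := ⟨n - 1, by omega⟩
  obtain ⟨p, hp_deg, hp_coeff, hp_bound⟩ := exists_poly_bound_cascade hρ.1.le hδ hdiff
    (by simpa using hderiv1) hderivk (by simpa using hinit 1 le_rfl (by omega)) le_rfl
  refine ⟨p.erase m, (natDegree_erase_le_pred hp_deg).trans (by omega), fun t ht => ?_⟩
  rw [Nat.add_sub_cancel, ← hp_coeff, ← eval_monomial, ← eval_add, monomial_add_erase]
  exact hp_bound t ht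

/-- Leading term of the convergence-rate bound (Eq. (34) of Section 5.3 of the paper):
for the cascade `Q₁' ≤ −(ρ/t)Q₁`, `Q_k' ≤ −(ρ/t)(Q_k − Q_{k−1})` with
`Q_k(t_k) ≤ 1 − ρ^k/k!` (`t_k = k·δ`, `t₁ = δ`), the top failure probability satisfies
`Q_n(t) ≤ t^{−ρ}·[((1 − ρ)·t₁^ρ·ρ^{n−1}/(n−1)!)·(ln t)^{n−1} + q(ln t)]`
for some polynomial `q` of degree at most `n − 2`. -/
theorem stmt_14 (n : ℕ) (hn : 2 ≤ n) (ρ δ : ℝ) (hρ : ρ ∈ Set.Ioo (0:ℝ) 1) (hδ : 0 < δ)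
    (Q : ℕ → ℝ → ℝ)
    (hnonneg : ∀ k : ℕ, 1 ≤ k → k ≤ n → ∀ t : ℝ, (k : ℝ) * δ ≤ t → 0 ≤ Q k t)
    (hdiff : ∀ k : ℕ, 1 ≤ k → k ≤ n → ∀ t : ℝ, (k : ℝ) * δ ≤ t →
      DifferentiableAt ℝ (Q k) t)
    (hderiv1 : ∀ t : ℝ, (1 : ℝ) * δ ≤ t → deriv (Q 1) t ≤ -(ρ / t) * Q 1 t)
    (hderivk : ∀ k : ℕ, 2 ≤ k → k ≤ n → ∀ t : ℝ, (k : ℝ) * δ ≤ t →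
      deriv (Q k) t ≤ -(ρ / t) * (Q k t - Q (k - 1) t))
    (hinit : ∀ k : ℕ, 1 ≤ k → k ≤ n →
      Q k ((k : ℝ) * δ) ≤ 1 - ρ ^ k / (Nat.factorial k : ℝ)) :
    ∃ q : Polynomial ℝ, q.natDegree ≤ n - 2 ∧
      ∀ t : ℝ, (n : ℝ) * δ ≤ t →
        Q n t ≤ t ^ (-ρ) *
          (((1 - ρ) * δ ^ ρ * ρ ^ (n - 1) / (Nat.factorial (n - 1) : ℝ)) *
              (Real.log t) ^ (n - 1) +
            q.eval (Real.log t)) :=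
  stmt_14_general n hn ρ δ hρ hδ Q hdiff hderiv1 hderivk hinit
end

section
/- Let ρ > 0, let t₀ > 0, and let Q₁, …, Q_k : [t₀, ∞) → ℝ be differentiable nonnegative functions satisfying Q₁'(t) ≤ −(ρ/t)·Q₁(t) and Q_i'(t) ≤ −(ρ/t)·(Q_i(t) − Q_{i−1}(t)) for 2 ≤ i ≤ k and all t ≥ t₀. Define V(t) = ∑_{i=1}^k Q_i(t)². Then for all t ≥ t₀, V'(t) ≤ −(2ρ/t)·( Q₁(t)² + ∑_{i=2}^k Q_i(t)·(Q_i(t) − Q_{i−1}(t)) ), and moreover V'(t) ≤ 0. -/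
/-!
Multiplying the `i`-th differential inequality by `2 Qᵢ ≥ 0` and summing gives the bound on `V'`.
The bracket is nonnegative because twice it telescopes into the sum of squares
`Q₁² + Q_k² + ∑_{i=2}^k (Qᵢ - Q_{i-1})²`.
-/

open Finset

theorem two_mul_sq_add_sum_mul_sub_eq (a : ℕ → ℝ) {k : ℕ} (hk : 1 ≤ k) :
    2 * (a 1 ^ 2 + ∑ i ∈ Icc 2 k, a i * (a i - a (i - 1))) =
      a 1 ^ 2 + a k ^ 2 + ∑ i ∈ Icc 2 k, (a i - a (i - 1)) ^ 2 := by
  induction k, hk using Nat.le_induction with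
  | base => rw [Icc_eq_empty_of_lt one_lt_two, sum_empty, sum_empty]; ring
  | succ n hn ih =>
    rw [sum_Icc_succ_top (by omega), sum_Icc_succ_top (by omega), Nat.add_sub_cancel]
    linear_combination ih

theorem sq_add_sum_mul_sub_nonneg (a : ℕ → ℝ) {k : ℕ} (hk : 1 ≤ k) :
    0 ≤ a 1 ^ 2 + ∑ i ∈ Icc 2 k, a i * (a i - a (i - 1)) := by
  have h := two_mul_sq_add_sum_mul_sub_eq a hk
  have : 0 ≤ ∑ i ∈ Icc 2 k, (a i - a (i - 1)) ^ 2 := sum_nonneg fun i _ => sq_nonneg _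
  nlinarith [sq_nonneg (a 1), sq_nonneg (a k)]

theorem hasDerivAt_sum_sq {ι : Type*} (s : Finset ι) (f : ι → ℝ → ℝ) {t : ℝ}
    (hf : ∀ i ∈ s, DifferentiableAt ℝ (f i) t) :
    HasDerivAt (fun x => ∑ i ∈ s, f i x ^ 2) (∑ i ∈ s, 2 * f i t * deriv (f i) t) t := by
  refine HasDerivAt.fun_sum fun i hi => ?_
  simpa [mul_comm] using ((hf i hi).hasDerivAt.fun_pow 2)

theorem two_mul_mul_le_of_le_neg_div_mul {q q' ρ t d : ℝ} (hq : 0 ≤ q)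
    (h : q' ≤ -(ρ / t) * d) : 2 * q * q' ≤ -(2 * ρ / t) * (q * d) :=
  calc 2 * q * q' ≤ 2 * q * (-(ρ / t) * d) := by gcongr
    _ = -(2 * ρ / t) * (q * d) := by ring

/-- The Lyapunov argument of Section 5.2 of the paper: for nonnegative differentiable
`Q₁, …, Q_k` with `Q₁' ≤ −(ρ/t)Q₁` and `Q_i' ≤ −(ρ/t)(Q_i − Q_{i−1})` on `[t₀, ∞)`, the
Lyapunov function `V = ∑ Q_i²` satisfies
`V'(t) ≤ −(2ρ/t)(Q₁(t)² + ∑_{i=2}^k Q_i(t)(Q_i(t) − Q_{i−1}(t))) ≤ 0`. -/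
theorem stmt_15 (k : ℕ) (hk : 1 ≤ k) (ρ t₀ : ℝ) (hρ : 0 < ρ) (ht₀ : 0 < t₀)
    (Q : ℕ → ℝ → ℝ)
    (hnonneg : ∀ i : ℕ, 1 ≤ i → i ≤ k → ∀ t : ℝ, t₀ ≤ t → 0 ≤ Q i t)
    (hdiff : ∀ i : ℕ, 1 ≤ i → i ≤ k → ∀ t : ℝ, t₀ ≤ t → DifferentiableAt ℝ (Q i) t)
    (hderiv1 : ∀ t : ℝ, t₀ ≤ t → deriv (Q 1) t ≤ -(ρ / t) * Q 1 t)
    (hderivi : ∀ i : ℕ, 2 ≤ i → i ≤ k → ∀ t : ℝ, t₀ ≤ t →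
      deriv (Q i) t ≤ -(ρ / t) * (Q i t - Q (i - 1) t))
    (V : ℝ → ℝ)
    (hV : ∀ t : ℝ, V t = ∑ i ∈ Finset.Icc 1 k, (Q i t) ^ 2) :
    ∀ t : ℝ, t₀ ≤ t →
      deriv V t ≤ -(2 * ρ / t) *
          (Q 1 t ^ 2 + ∑ i ∈ Finset.Icc 2 k, Q i t * (Q i t - Q (i - 1) t)) ∧
      deriv V t ≤ 0 := by
  intro t ht
  have hV' : HasDerivAt V (∑ i ∈ Icc 1 k, 2 * Q i t * deriv (Q i) t) t := by
    rw [funext hV]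
    exact hasDerivAt_sum_sq _ _ fun i hi => hdiff i (mem_Icc.1 hi).1 (mem_Icc.1 hi).2 t ht
  have hbound : deriv V t ≤ -(2 * ρ / t) *
      (Q 1 t ^ 2 + ∑ i ∈ Icc 2 k, Q i t * (Q i t - Q (i - 1) t)) := by
    rw [hV'.deriv, ← insert_Icc_add_one_left_eq_Icc hk, sum_insert (by simp), mul_add,
      mul_sum, sq]
    refine add_le_add (two_mul_mul_le_of_le_neg_div_mul (hnonneg 1 le_rfl hk t ht) (hderiv1 t ht))
      (sum_le_sum fun i hi => ?_)
    obtain ⟨hi2, hik⟩ := mem_Icc.1 hi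
    exact two_mul_mul_le_of_le_neg_div_mul (hnonneg i (by omega) hik t ht) (hderivi i hi2 hik t ht)
  refine ⟨hbound, hbound.trans (mul_nonpos_of_nonpos_of_nonneg ?_ ?_)⟩
  · have : 0 < t := ht₀.trans_le ht
    exact neg_nonpos.2 (by positivity)
  · exact sq_add_sum_mul_sub_nonneg (fun i => Q i t) hk
end
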